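/- For any θ̂, θ̃ ∈ Θ and any r̂, r̃ ∈ [0,1], the Hausdorff distance (with respect to the ℓ∞ norm) between the two ambiguity sets satisfies ℍ(𝔹∞(θ̂, r̂) ∩ Θ, 𝔹∞(θ̃, r̃) ∩ Θ) ≤ ‖θ̂ − θ̃‖_∞ + |r̂ − r̃|. -/

import Mathlib

open Set Filter MeasureTheory
open scoped ENNReal

noncomputable section

/-- The probability simplex Θ in ℝⁿ. -/
def simplex (n : ℕ) : Set (Fin n → ℝ) := {θ | ∑ j, θ j = 1 ∧ ∀ j, 0 ≤ θ j}

/-- Ambiguity set `𝔹∞(c, r) ∩ Θ`.  (The norm on `Fin n → ℝ` is the sup norm.) -/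
def amb {n : ℕ} (c : Fin n → ℝ) (r : ℝ) : Set (Fin n → ℝ) :=
  {θ | ‖θ - c‖ ≤ r} ∩ simplex n

/-- Regularized lower-level objective `∑_j θ_j h_j(x) − λ‖θ‖²` (Euclidean norm squared). -/
def obj {n d : ℕ} (h : Fin n → (Fin d → ℝ) → ℝ) (lam : ℝ) (x : Fin d → ℝ)
    (θ : Fin n → ℝ) : ℝ :=
  (∑ j, θ j * h j x) - lam * ∑ j, (θ j) ^ 2

/-- Optimal value `ν^λ(x, c, r)` of the regularized lower-level problem. -/
def nuval {n d : ℕ} (h : Fin n → (Fin d → ℝ) → ℝ) (lam : ℝ) (x : Fin d → ℝ)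
    (c : Fin n → ℝ) (r : ℝ) : ℝ :=
  sSup (obj h lam x '' amb c r)

/-- Maximizer set `ϑ^λ(x, c, r)` of the regularized lower-level problem. -/
def argmaxSet {n d : ℕ} (h : Fin n → (Fin d → ℝ) → ℝ) (lam : ℝ) (x : Fin d → ℝ)
    (c : Fin n → ℝ) (r : ℝ) : Set (Fin n → ℝ) :=
  {θ ∈ amb c r | obj h lam x θ = nuval h lam x c r}

/-- Normal cone of `X` at `x` (standard inner product on ℝ^d). -/
def normalCone {d : ℕ} (X : Set (Fin d → ℝ)) (x : Fin d → ℝ) : Set (Fin d → ℝ) :=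
  {v | ∀ y ∈ X, ∑ i, v i * (y i - x i) ≤ 0}

/-- x-solution set `𝔛^λ(c, r)` of the (regularized) Bayesian DRVI. -/
def solSet {n d : ℕ} (G : Fin n → (Fin d → ℝ) → Fin d → ℝ)
    (h : Fin n → (Fin d → ℝ) → ℝ) (lam : ℝ) (X : Set (Fin d → ℝ))
    (c : Fin n → ℝ) (r : ℝ) : Set (Fin d → ℝ) :=
  {x ∈ X | ∃ θ ∈ argmaxSet h lam x c r,
      ∀ y ∈ X, 0 ≤ ∑ i, (∑ j, θ j * G j x i) * (y i - x i)}

/-- One-sided deviation `𝔻(S, T)` (the metric of the Pi type is the sup metric). -/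
def dev {α : Type*} [PseudoMetricSpace α] (S T : Set α) : ℝ :=
  sSup ((fun s => Metric.infDist s T) '' S)

/-- One-sided deviation with values in `ℝ≥0∞`. -/
def devE {α : Type*} [PseudoMetricSpace α] (S T : Set α) : ℝ≥0∞ :=
  ⨆ s ∈ S, ENNReal.ofReal (Metric.infDist s T)

/-- Lower-level growth function `ψ_x^λ` at parameters `(c, r)`
(values in `[0,∞]`; the infimum over the empty set is `⊤`). -/
def psiLow {n d : ℕ} (h : Fin n → (Fin d → ℝ) → ℝ) (lam : ℝ) (x : Fin d → ℝ)
    (c : Fin n → ℝ) (r : ℝ) (τ : ℝ) : ℝ≥0∞ :=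
  ⨅ θ ∈ {θ ∈ amb c r | τ ≤ Metric.infDist θ (argmaxSet h lam x c r)},
    ENNReal.ofReal (nuval h lam x c r - obj h lam x θ)

/-- Generalized inverse `(ψ_x^λ)⁻¹(t) = sup{τ ≥ 0 : ψ_x^λ(τ) ≤ t}`. -/
def psiLowInv {n d : ℕ} (h : Fin n → (Fin d → ℝ) → ℝ) (lam : ℝ) (x : Fin d → ℝ)
    (c : Fin n → ℝ) (r : ℝ) (t : ℝ) : ℝ≥0∞ :=
  ⨆ τ ∈ {τ : ℝ | 0 ≤ τ ∧ psiLow h lam x c r τ ≤ ENNReal.ofReal t}, ENNReal.ofReal τ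

/-- `Ψ_x^λ(η) = η + (ψ_x^λ)⁻¹(2η)`. -/
def PsiLow {n d : ℕ} (h : Fin n → (Fin d → ℝ) → ℝ) (lam : ℝ) (x : Fin d → ℝ)
    (c : Fin n → ℝ) (r : ℝ) (η : ℝ) : ℝ≥0∞ :=
  ENNReal.ofReal η + psiLowInv h lam x c r (2 * η)

/-- Residual `d(0, ∑_j θ_j G_j(x) + N_X(x))` (ℓ∞ distance). -/
def resid {n d : ℕ} (G : Fin n → (Fin d → ℝ) → Fin d → ℝ) (X : Set (Fin d → ℝ))
    (x : Fin d → ℝ) (θ : Fin n → ℝ) : ℝ :=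
  Metric.infDist (0 : Fin d → ℝ)
    ((fun w => (fun i => ∑ j, θ j * G j x i) + w) '' normalCone X x)

/-- Solution-set growth function `ψ^λ_{c,r}` (values in `[0,∞]`). -/
def psiSol {n d : ℕ} (G : Fin n → (Fin d → ℝ) → Fin d → ℝ)
    (h : Fin n → (Fin d → ℝ) → ℝ) (lam : ℝ) (X : Set (Fin d → ℝ))
    (c : Fin n → ℝ) (r : ℝ) (τ : ℝ) : ℝ≥0∞ :=
  ⨅ x ∈ {x ∈ X | τ ≤ Metric.infDist x (solSet G h lam X c r)},
    ⨅ θ ∈ argmaxSet h lam x c r, ENNReal.ofReal (resid G X x θ)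

/-- Generalized inverse `(ψ^λ_{c,r})⁻¹(t) = sup{τ ≥ 0 : ψ^λ_{c,r}(τ) ≤ t}`. -/
def psiSolInv {n d : ℕ} (G : Fin n → (Fin d → ℝ) → Fin d → ℝ)
    (h : Fin n → (Fin d → ℝ) → ℝ) (lam : ℝ) (X : Set (Fin d → ℝ))
    (c : Fin n → ℝ) (r : ℝ) (t : ℝ) : ℝ≥0∞ :=
  ⨆ τ ∈ {τ : ℝ | 0 ≤ τ ∧ psiSol G h lam X c r τ ≤ ENNReal.ofReal t}, ENNReal.ofReal τ

section ConvexClosedBallInter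

variable {E : Type*} [SeminormedAddCommGroup E] [NormedSpace ℝ E] {S : Set E}

theorem Convex.infDist_closedBall_inter_le (hS : Convex ℝ S) {c x : E} (hc : c ∈ S)
    (hx : x ∈ S) {r : ℝ} (hr : 0 ≤ r) :
    Metric.infDist x (Metric.closedBall c r ∩ S) ≤ max (dist x c - r) 0 := by
  rcases le_or_gt (dist x c) r with hxr | hrx
  · rw [Metric.infDist_zero_of_mem (show x ∈ Metric.closedBall c r ∩ S from ⟨hxr, hx⟩)]
    exact le_max_right _ _
  have hpos : 0 < dist c x := by rw [dist_comm]; linarith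
  -- the witness is the point of the segment `[c, x]` at distance `r` from `c`
  set t := r / dist c x
  have ht : t ∈ Icc (0 : ℝ) 1 :=
    ⟨div_nonneg hr hpos.le, (div_le_one hpos).2 (by rw [dist_comm]; exact hrx.le)⟩
  have hmem : AffineMap.lineMap c x t ∈ Metric.closedBall c r ∩ S := by
    refine ⟨?_, hS.lineMap_mem hc hx ht⟩
    rw [Metric.mem_closedBall, dist_lineMap_left, Real.norm_of_nonneg ht.1,
      div_mul_cancel₀ _ hpos.ne']
  calc Metric.infDist x (Metric.closedBall c r ∩ S)
      ≤ dist x (AffineMap.lineMap c x t) := Metric.infDist_le_dist_of_mem hmem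
    _ = (1 - t) * dist c x := by
      rw [dist_comm, dist_lineMap_right, Real.norm_of_nonneg (sub_nonneg.2 ht.2)]
    _ = dist x c - r := by rw [sub_mul, one_mul, div_mul_cancel₀ _ hpos.ne', dist_comm]
    _ ≤ max (dist x c - r) 0 := le_max_left _ _

theorem Convex.infDist_closedBall_inter_le_dist_add_abs_sub (hS : Convex ℝ S) {c₁ c₂ x : E}
    {r₁ r₂ : ℝ} (hc₂ : c₂ ∈ S) (hr₂ : 0 ≤ r₂) (hx : x ∈ Metric.closedBall c₁ r₁ ∩ S) :
    Metric.infDist x (Metric.closedBall c₂ r₂ ∩ S) ≤ dist c₁ c₂ + |r₁ - r₂| := by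
  have hxc₂ : dist x c₂ ≤ r₁ + dist c₁ c₂ :=
    (dist_triangle x c₁ c₂).trans (by linarith [Metric.mem_closedBall.1 hx.1])
  refine (hS.infDist_closedBall_inter_le hc₂ hx.2 hr₂).trans (max_le ?_ (by positivity))
  linarith [le_abs_self (r₁ - r₂)]

theorem Convex.hausdorffDist_closedBall_inter_le (hS : Convex ℝ S) {c₁ c₂ : E} {r₁ r₂ : ℝ}
    (hc₁ : c₁ ∈ S) (hc₂ : c₂ ∈ S) (hr₁ : 0 ≤ r₁) (hr₂ : 0 ≤ r₂) :
    Metric.hausdorffDist (Metric.closedBall c₁ r₁ ∩ S) (Metric.closedBall c₂ r₂ ∩ S) ≤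
      dist c₁ c₂ + |r₁ - r₂| := by
  refine Metric.hausdorffDist_le_of_infDist (by positivity)
    (fun _ hx => hS.infDist_closedBall_inter_le_dist_add_abs_sub hc₂ hr₂ hx) fun x hx => ?_
  rw [dist_comm, abs_sub_comm]
  exact hS.infDist_closedBall_inter_le_dist_add_abs_sub hc₁ hr₁ hx

end ConvexClosedBallInter

theorem simplex_eq_stdSimplex (n : ℕ) : simplex n = stdSimplex ℝ (Fin n) := by
  ext θ
  exact and_comm

theorem convex_simplex (n : ℕ) : Convex ℝ (simplex n) :=
  simplex_eq_stdSimplex n ▸ convex_stdSimplex ℝ (Fin n)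

theorem amb_eq_closedBall_inter {n : ℕ} (c : Fin n → ℝ) (r : ℝ) :
    amb c r = Metric.closedBall c r ∩ simplex n := by
  ext θ
  exact and_congr_left' mem_closedBall_iff_norm.symm

theorem ambiguity_set_stability_general {n : ℕ}
    (θh θt : Fin n → ℝ) (hθh : θh ∈ simplex n) (hθt : θt ∈ simplex n)
    (rh rt : ℝ) (hrh : rh ∈ Set.Icc (0 : ℝ) 1) (hrt : rt ∈ Set.Icc (0 : ℝ) 1) :
    Metric.hausdorffDist (amb θh rh) (amb θt rt) ≤ ‖θh - θt‖ + |rh - rt| := by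
  rw [amb_eq_closedBall_inter, amb_eq_closedBall_inter, ← dist_eq_norm]
  exact (convex_simplex n).hausdorffDist_closedBall_inter_le hθh hθt hrh.1 hrt.1

/-- Lemma 4.1: quantitative stability of Bayesian parametric ambiguity sets
(the metric on `Fin n → ℝ` is the sup metric, so this is the ℓ∞ Hausdorff distance). -/
theorem ambiguity_set_stability {n : ℕ} (hn : 1 ≤ n)
    (θh θt : Fin n → ℝ) (hθh : θh ∈ simplex n) (hθt : θt ∈ simplex n)
    (rh rt : ℝ) (hrh : rh ∈ Set.Icc (0 : ℝ) 1) (hrt : rt ∈ Set.Icc (0 : ℝ) 1) :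
    Metric.hausdorffDist (amb θh rh) (amb θt rt) ≤ ‖θh - θt‖ + |rh - rt| :=
  ambiguity_set_stability_general θh θt hθh hθt rh rt hrh hrt
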